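/- The packet-level code over F_3 with k = 2, n = 3 and parity symbol p_0(t) = m_0(t−5) + 2·m_1(t−4) + m_0(t−2) + m_1(t−1) is a (2,5,2) locally recoverable streaming code; i.e., it is simultaneously a (1,2) SC and a (2,5) SC. Its rate is 2/3, which equals min{(5+1−2)/(5+1), 2/(2+1)}, so it is a rate-optimal (2,5,2) LRSC. -/

import Mathlib

/-- A packet-level code with a causal systematic encoder: the parity part of the
coded packet at time `t` is a fixed function of the message packets at times `≤ t`. -/
structure PacketCode (F : Type) (k n : ℕ) where
  parity : (ℤ → Fin k → F) → ℤ → Fin (n - k) → F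
  causal : ∀ (m m' : ℤ → Fin k → F) (t : ℤ),
    (∀ t' ≤ t, m t' = m' t') → parity m t = parity m' t

/-- A valid message stream vanishes at negative times. -/
def IsMsgStream {F : Type} [Zero F] {k : ℕ} (m : ℤ → Fin k → F) : Prop :=
  ∀ t < 0, m t = 0

/-- `(a, τ)` streaming-code property. -/
def IsSC {F : Type} [Zero F] {k n : ℕ} (C : PacketCode F k n) (a τ : ℕ) : Prop :=
  ∀ m m' : ℤ → Fin k → F, IsMsgStream m → IsMsgStream m' →
    ∀ t : ℤ, 0 ≤ t →
      ∀ E : Finset ℤ, (∀ x ∈ E, t ≤ x ∧ x ≤ t + τ) → t ∈ E → E.card ≤ a →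
        (∀ t' < t, m t' = m' t') →
        (∀ t' : ℤ, t ≤ t' → t' ≤ t + τ → t' ∉ E →
          m t' = m' t' ∧ C.parity m t' = C.parity m' t') →
        m t = m' t

/-- `(a, τ, r)` locally recoverable streaming code. -/
def IsLRSC {F : Type} [Zero F] {k n : ℕ} (C : PacketCode F k n) (a τ r : ℕ) : Prop :=
  IsSC C a τ ∧ IsSC C 1 r

/-- The `(2,5,2)` example code over `F₃`: `k = 2`, `n = 3`, with parity symbol
`p₀(t) = m₀(t-5) + 2·m₁(t-4) + m₀(t-2) + m₁(t-1)`. -/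
def exampleCode252 : PacketCode (ZMod 3) 2 3 where
  parity := fun m t _ =>
    m (t - 5) 0 + 2 * m (t - 4) 1 + m (t - 2) 0 + m (t - 1) 1
  causal := by
    intro m m' t h
    funext s
    try dsimp only
    rw [h (t - 5) (by omega), h (t - 4) (by omega), h (t - 2) (by omega),
      h (t - 1) (by omega)]


/-!
Write `p(s) = m₀(s-5) + 2·m₁(s-4) + m₀(s-2) + m₁(s-1)`. Once everything before `t` is known,
`p(t+1)` exposes `m₁(t)` alone and `p(t+2)` exposes `m₀(t) + m₁(t+1)`, so `m(t)` is recovered from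
the packets at `t+1, t+2`; this gives the `(1,2)` property and handles a second erasure after `t+2`.
If the second erasure is at `t+2`, `m₀(t)` is read off `p(t+5)` instead. If it is at `t+1`, `m₁(t)`
is read off `p(t+4)` (its coefficient `2` is a unit of `𝔽₃`), while `p(t+2)` and `p(t+5)` give
`m₀(t) + m₁(t+1)` and `m₀(t) + 2·m₁(t+1)`, an invertible system for `m₀(t)`.
-/

namespace PacketCode

variable {F : Type} [Zero F] {k n : ℕ} (C : PacketCode F k n) {τ : ℕ}

theorem isSC_one_of_recover
    (h : ∀ m m' : ℤ → Fin k → F, IsMsgStream m → IsMsgStream m' → ∀ t : ℤ, 0 ≤ t →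
      (∀ t' < t, m t' = m' t') →
      (∀ t' : ℤ, t < t' → t' ≤ t + τ → m t' = m' t' ∧ C.parity m t' = C.parity m' t') →
      m t = m' t) :
    IsSC C 1 τ := by
  intro m m' hm hm' t ht E _ htE hcard hpast hknown
  refine h m m' hm hm' t ht hpast fun t' ht' ht'τ => hknown t' ht'.le ht'τ fun ht'E => ?_
  exact ht'.ne' (Finset.card_le_one.1 hcard t' ht'E t htE)

theorem isSC_two_of_recover
    (h : ∀ m m' : ℤ → Fin k → F, IsMsgStream m → IsMsgStream m' → ∀ t : ℤ, 0 ≤ t → ∀ u : ℤ,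
      (∀ t' < t, m t' = m' t') →
      (∀ t' : ℤ, t < t' → t' ≤ t + τ → t' ≠ u →
        m t' = m' t' ∧ C.parity m t' = C.parity m' t') →
      m t = m' t) :
    IsSC C 2 τ := by
  intro m m' hm hm' t ht E _ htE hcard hpast hknown
  have hrest : (E.erase t).card ≤ 1 := by
    rw [Finset.card_erase_of_mem htE]
    omega
  obtain ⟨u, hu⟩ := Finset.card_le_one_iff_subset_singleton.1 hrest
  refine h m m' hm hm' t ht u hpast fun t' ht' ht'τ ht'u => hknown t' ht'.le ht'τ fun ht'E => ?_
  exact ht'u (Finset.mem_singleton.1 (hu (Finset.mem_erase.2 ⟨ht'.ne', ht'E⟩)))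

end PacketCode

section ExampleCode252

variable {m m' : ℤ → Fin 2 → ZMod 3} {t : ℤ}

theorem exampleCode252_parity_eq_iff {s : ℤ} :
    exampleCode252.parity m s = exampleCode252.parity m' s ↔
      m (s - 5) 0 + 2 * m (s - 4) 1 + m (s - 2) 0 + m (s - 1) 1 =
        m' (s - 5) 0 + 2 * m' (s - 4) 1 + m' (s - 2) 0 + m' (s - 1) 1 :=
  ⟨fun h => congrFun h 0, fun h => funext fun _ => h⟩

theorem exampleCode252_recover_one_of_parity_succ (hpast : ∀ t' < t, m t' = m' t')
    (hp1 : exampleCode252.parity m (t + 1) = exampleCode252.parity m' (t + 1)) :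
    m t 1 = m' t 1 := by
  linear_combination (norm := ring_nf) exampleCode252_parity_eq_iff.1 hp1
    - congrFun (hpast (t - 4) (by omega)) 0 - 2 * congrFun (hpast (t - 3) (by omega)) 1
    - congrFun (hpast (t - 1) (by omega)) 0

theorem exampleCode252_recover_one_of_parity_add_four (hpast : ∀ t' < t, m t' = m' t')
    (hm2 : m (t + 2) = m' (t + 2)) (hm3 : m (t + 3) = m' (t + 3))
    (hp4 : exampleCode252.parity m (t + 4) = exampleCode252.parity m' (t + 4)) :
    m t 1 = m' t 1 := by
  refine mul_left_cancel₀ (by decide : (2 : ZMod 3) ≠ 0) ?_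
  linear_combination (norm := ring_nf) exampleCode252_parity_eq_iff.1 hp4
    - congrFun (hpast (t - 1) (by omega)) 0 - congrFun hm2 0 - congrFun hm3 1

theorem exampleCode252_recover_zero_of_parity_add_two (hpast : ∀ t' < t, m t' = m' t')
    (hm1 : m (t + 1) = m' (t + 1))
    (hp2 : exampleCode252.parity m (t + 2) = exampleCode252.parity m' (t + 2)) :
    m t 0 = m' t 0 := by
  linear_combination (norm := ring_nf) exampleCode252_parity_eq_iff.1 hp2
    - congrFun (hpast (t - 3) (by omega)) 0 - 2 * congrFun (hpast (t - 2) (by omega)) 1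
    - congrFun hm1 1

theorem exampleCode252_recover_zero_of_parity_add_five (hm1 : m (t + 1) = m' (t + 1))
    (hm3 : m (t + 3) = m' (t + 3)) (hm4 : m (t + 4) = m' (t + 4))
    (hp5 : exampleCode252.parity m (t + 5) = exampleCode252.parity m' (t + 5)) :
    m t 0 = m' t 0 := by
  linear_combination (norm := ring_nf) exampleCode252_parity_eq_iff.1 hp5
    - 2 * congrFun hm1 1 - congrFun hm3 0 - congrFun hm4 1

theorem exampleCode252_recover_zero_of_parity_add_two_add_five
    (hpast : ∀ t' < t, m t' = m' t') (hm3 : m (t + 3) = m' (t + 3))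
    (hm4 : m (t + 4) = m' (t + 4))
    (hp2 : exampleCode252.parity m (t + 2) = exampleCode252.parity m' (t + 2))
    (hp5 : exampleCode252.parity m (t + 5) = exampleCode252.parity m' (t + 5)) :
    m t 0 = m' t 0 := by
  have hsum : m t 0 + m (t + 1) 1 = m' t 0 + m' (t + 1) 1 := by
    linear_combination (norm := ring_nf) exampleCode252_parity_eq_iff.1 hp2
      - congrFun (hpast (t - 3) (by omega)) 0 - 2 * congrFun (hpast (t - 2) (by omega)) 1
  have hsum' : m t 0 + 2 * m (t + 1) 1 = m' t 0 + 2 * m' (t + 1) 1 := by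
    linear_combination (norm := ring_nf) exampleCode252_parity_eq_iff.1 hp5
      - congrFun hm3 0 - congrFun hm4 1
  linear_combination 2 * hsum - hsum'

theorem exampleCode252_recover_of_succ_of_add_two (hpast : ∀ t' < t, m t' = m' t')
    (hm1 : m (t + 1) = m' (t + 1))
    (hp1 : exampleCode252.parity m (t + 1) = exampleCode252.parity m' (t + 1))
    (hp2 : exampleCode252.parity m (t + 2) = exampleCode252.parity m' (t + 2)) :
    m t = m' t :=
  funext <| Fin.forall_fin_two.2
    ⟨exampleCode252_recover_zero_of_parity_add_two hpast hm1 hp2,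
      exampleCode252_recover_one_of_parity_succ hpast hp1⟩

theorem exampleCode252_isSC_one_two : IsSC exampleCode252 1 2 := by
  refine exampleCode252.isSC_one_of_recover fun m m' _ _ t _ hpast hknown => ?_
  obtain ⟨hm1, hp1⟩ := hknown (t + 1) (by omega) (by omega)
  exact exampleCode252_recover_of_succ_of_add_two hpast hm1 hp1
    (hknown (t + 2) (by omega) (by omega)).2

theorem exampleCode252_isSC_two_five : IsSC exampleCode252 2 5 := by
  refine exampleCode252.isSC_two_of_recover fun m m' _ _ t _ u hpast hknown => ?_
  by_cases hu1 : u = t + 1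
  · obtain ⟨hm2, hp2⟩ := hknown (t + 2) (by omega) (by omega) (by omega)
    obtain ⟨hm3, -⟩ := hknown (t + 3) (by omega) (by omega) (by omega)
    obtain ⟨hm4, hp4⟩ := hknown (t + 4) (by omega) (by omega) (by omega)
    obtain ⟨-, hp5⟩ := hknown (t + 5) (by omega) (by omega) (by omega)
    exact funext <| Fin.forall_fin_two.2
      ⟨exampleCode252_recover_zero_of_parity_add_two_add_five hpast hm3 hm4 hp2 hp5,
        exampleCode252_recover_one_of_parity_add_four hpast hm2 hm3 hp4⟩
  obtain ⟨hm1, hp1⟩ := hknown (t + 1) (by omega) (by omega) (by omega)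
  by_cases hu2 : u = t + 2
  · obtain ⟨hm3, -⟩ := hknown (t + 3) (by omega) (by omega) (by omega)
    obtain ⟨hm4, -⟩ := hknown (t + 4) (by omega) (by omega) (by omega)
    obtain ⟨-, hp5⟩ := hknown (t + 5) (by omega) (by omega) (by omega)
    exact funext <| Fin.forall_fin_two.2
      ⟨exampleCode252_recover_zero_of_parity_add_five hm1 hm3 hm4 hp5,
        exampleCode252_recover_one_of_parity_succ hpast hp1⟩
  exact exampleCode252_recover_of_succ_of_add_two hpast hm1 hp1
    (hknown (t + 2) (by omega) (by omega) (by omega)).2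

end ExampleCode252

theorem exampleCode252_isLRSC :
    IsLRSC exampleCode252 2 5 2 ∧
    (2 : ℚ) / 3 = min (((5 : ℚ) + 1 - 2) / ((5 : ℚ) + 1)) ((2 : ℚ) / ((2 : ℚ) + 1)) :=
  ⟨⟨exampleCode252_isSC_two_five, exampleCode252_isSC_one_two⟩, by norm_num⟩
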